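/- Let p be an odd prime and suppose E, A ⊆ 𝔽_p^3 form a spectral pair with |E| = |A| = mp, where 2 ≤ m ≤ p − 1. Then |E ∩ ℓ| ≤ min{m, p − m} and |A ∩ ℓ| ≤ min{m, p − m} for every line ℓ of 𝔽_p^3 (every coset of every one-dimensional subspace). -/

import Mathlib

open Finset

/-- The character `x ↦ e^{2πi (x·a)/p}` on `𝔽_p^d`. -/
noncomputable def chr (p : ℕ) {d : ℕ} (a x : Fin d → ZMod p) : ℂ :=
  Complex.exp (2 * (Real.pi : ℂ) * Complex.I *
    ((ZMod.val (∑ i, x i * a i) : ℕ) : ℂ) / (p : ℂ))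

/-- `(E, A)` is a spectral pair: the characters `χ_a`, `a ∈ A`, restricted to `E`,
are pairwise orthogonal, span `L²(E)`, and are linearly independent, i.e. they
form an orthogonal basis of `L²(E)`. -/
def IsSpectralPair (p : ℕ) {d : ℕ} (E A : Finset (Fin d → ZMod p)) : Prop :=
  (∀ a ∈ A, ∀ b ∈ A, a ≠ b →
    ∑ x ∈ E, chr p a x * (starRingEnd ℂ) (chr p b x) = 0) ∧
  (∀ f : E → ℂ, ∃ c : A → ℂ, ∀ x : E, f x = ∑ a : A, c a * chr p a.1 x.1) ∧
  (∀ c : A → ℂ, (∀ x : E, ∑ a : A, c a * chr p a.1 x.1 = 0) → ∀ a, c a = 0)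

/-- `E` is a spectral set. -/
def IsSpectral (p : ℕ) {d : ℕ} (E : Finset (Fin d → ZMod p)) : Prop :=
  ∃ A, IsSpectralPair p E A

/-- `E` tiles `𝔽_p^d` by translation. -/
def Tiles (p : ℕ) {d : ℕ} (E : Finset (Fin d → ZMod p)) : Prop :=
  ∃ A : Finset (Fin d → ZMod p),
    ∀ x, (∑ a ∈ A, if x - a ∈ E then (1 : ℕ) else 0) = 1

/-- `E` determines the direction (one-dimensional subspace) `D`. -/
def Determines (p : ℕ) {d : ℕ} (E : Finset (Fin d → ZMod p))
    (D : Submodule (ZMod p) (Fin d → ZMod p)) : Prop :=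
  ∃ e₁ ∈ E, ∃ e₂ ∈ E, e₁ ≠ e₂ ∧ e₁ - e₂ ∈ D

/-- The Fourier transform of the indicator function of `E`. -/
noncomputable def ftE (p : ℕ) {d : ℕ} (E : Finset (Fin d → ZMod p))
    (ξ : Fin d → ZMod p) : ℂ :=
  ((p : ℂ) ^ d)⁻¹ * ∑ x ∈ E, Complex.exp (-(2 * (Real.pi : ℂ) * Complex.I *
    ((ZMod.val (∑ i, x i * ξ i) : ℕ) : ℂ) / (p : ℂ)))

/-- The orthogonal set `S^⊥ = {x : x · y = 0 for all y ∈ S}`. -/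
def perpSet (p : ℕ) {d : ℕ} (S : Submodule (ZMod p) (Fin d → ZMod p)) :
    Set (Fin d → ZMod p) :=
  {x | ∀ y ∈ S, ∑ i, x i * y i = 0}

/-!
Write `ψ` for the standard additive character of `ZMod p`. Orthogonality of the characters
`χ_a`, `a ∈ A`, on `E` says `∑ x ∈ E, ψ (x ⬝ᵥ (a - b)) = 0` for `a ≠ b`. As `|E| = |A|`, the
character matrix is square, so its rows are orthogonal too and the roles of `E` and `A` are
symmetric. By irreducibility of the `p`-th cyclotomic polynomial, a vanishing sum
`∑ x ∈ S, ψ (x ⬝ᵥ w)` forces `S` to meet each plane `x ⬝ᵥ w = c` in exactly `|S| / p` points.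

Let `k ≥ 2` points of `E` lie on the line `v + 𝔽_p d`. Their difference makes `A`
equidistributed along `d`, so two points of `A` differ by some `w₀ ⟂ d`, and then `E` is
equidistributed along `w₀`: the plane through the line with normal `w₀` carries `m` points of `E`,
so `k ≤ m`. Since `p² ∤ m p`, every plane through the origin contains a direction `u` with
`∑ a ∈ A, ψ (a ⬝ᵥ u) ≠ 0`; no two points of `E` differ by a multiple of `u`, so every plane
contains at most `p` points of `E`. Finally count incidences between `E` and the `p²` sets
`{x | x ⬝ᵥ w = v ⬝ᵥ w}`, `w ⟂ d`, all containing the line: a point of the line lies in all of them,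
any other point in at least `p`; on the other side, the `w ∈ 𝔽_p w₀` contribute `m p + (p - 1) m`
and each of the remaining `p² - p` at most `p`. This gives `k ≤ p - m`.
-/

open Finset Matrix

namespace ZMod

variable {p : ℕ} [Fact p.Prime]

lemma isPrimitiveRoot_stdAddChar_one : IsPrimitiveRoot (stdAddChar (1 : ZMod p)) p := by
  have h := stdAddChar_coe (N := p) 1
  push_cast at h
  rw [h, mul_one]
  exact Complex.isPrimitiveRoot_exp p (NeZero.ne p)

lemma stdAddChar_eq_pow_val (c : ZMod p) : stdAddChar c = stdAddChar (1 : ZMod p) ^ c.val := by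
  rw [← AddChar.map_nsmul_eq_pow, nsmul_one, natCast_zmod_val]

lemma sum_stdAddChar : ∑ c : ZMod p, stdAddChar c = 0 :=
  AddChar.sum_eq_zero_iff_ne_zero.mpr fun h => one_ne_zero <| injective_stdAddChar (N := p) <| by
    rw [AddChar.map_zero_eq_one, h, AddChar.zero_apply]

lemma eq_of_sum_mul_stdAddChar_eq_zero {n : ZMod p → ℚ}
    (h : ∑ c, (n c : ℂ) * stdAddChar c = 0) (c c' : ZMod p) : n c = n c' := by
  obtain ⟨q, rfl⟩ : ∃ q, p = q + 1 := Nat.exists_eq_add_one.mpr (Fact.out : p.Prime).pos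
  set ζ := stdAddChar (1 : ZMod (q + 1))
  have hζ : IsPrimitiveRoot ζ (q + 1) := isPrimitiveRoot_stdAddChar_one
  have hdeg : (minpoly ℚ ζ).natDegree = q := by
    rw [← Polynomial.cyclotomic_eq_minpoly_rat hζ (Nat.succ_pos q),
      Polynomial.natDegree_cyclotomic, Nat.totient_prime Fact.out, Nat.add_sub_cancel]
  have hind := linearIndependent_pow (K := ℚ) ζ
  rw [hdeg] at hind
  have hsum : ∑ i : Fin (q + 1), (n i : ℂ) * ζ ^ (i : ℕ) = 0 :=
    (sum_congr rfl fun c _ => congrArg _ (stdAddChar_eq_pow_val (p := q + 1) c).symm).trans h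
  have hgeom : ∑ i : Fin (q + 1), ζ ^ (i : ℕ) = 0 := by
    rw [Fin.sum_univ_eq_sum_range]
    exact hζ.geom_sum_eq_zero (Fact.out : (q + 1).Prime).one_lt
  have hrel : ∑ i : Fin q, (n i.castSucc - n (Fin.last q)) • ζ ^ (i : ℕ) = 0 :=
    calc ∑ i : Fin q, (n i.castSucc - n (Fin.last q)) • ζ ^ (i : ℕ)
        = ∑ i : Fin (q + 1), ((n i - n (Fin.last q) : ℚ) : ℂ) * ζ ^ (i : ℕ) := by
          simp [Fin.sum_univ_castSucc, Rat.smul_def]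
      _ = ∑ i : Fin (q + 1), (n i : ℂ) * ζ ^ (i : ℕ) -
            n (Fin.last q) * ∑ i : Fin (q + 1), ζ ^ (i : ℕ) := by
          simp only [Rat.cast_sub, sub_mul, sum_sub_distrib, mul_sum]
      _ = 0 := by rw [hsum, hgeom, mul_zero, sub_zero]
  have hlast (c : Fin (q + 1)) : n c = n (Fin.last q) := by
    induction c using Fin.lastCases with
    | last => rfl
    | cast i => exact sub_eq_zero.mp (Fintype.linearIndependent_iff.mp hind _ hrel i)
  exact (hlast c).trans (hlast c').symm

variable {α : Type*} {S : Finset α} {f : α → ZMod p}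

lemma sum_stdAddChar_eq_zero_iff :
    ∑ x ∈ S, stdAddChar (f x) = 0 ↔ ∀ c c', #{x ∈ S | f x = c} = #{x ∈ S | f x = c'} := by
  have hfib : ∑ x ∈ S, stdAddChar (f x) = ∑ c, ((#{x ∈ S | f x = c} : ℚ) : ℂ) * stdAddChar c := by
    rw [← sum_fiberwise S f]
    refine sum_congr rfl fun c _ => ?_
    rw [sum_congr rfl fun x hx => by rw [(mem_filter.mp hx).2], sum_const, nsmul_eq_mul,
      Rat.cast_natCast]
  rw [hfib]
  refine ⟨fun h c c' => by exact_mod_cast eq_of_sum_mul_stdAddChar_eq_zero h c c', fun h => ?_⟩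
  rw [sum_congr rfl fun c _ => by rw [h c 0], ← mul_sum, sum_stdAddChar, mul_zero]

lemma sum_stdAddChar_mul_eq_zero_iff {t : ZMod p} (ht : t ≠ 0) :
    ∑ x ∈ S, stdAddChar (t * f x) = 0 ↔ ∑ x ∈ S, stdAddChar (f x) = 0 := by
  have hfib (c : ZMod p) : #{x ∈ S | t * f x = t * c} = #{x ∈ S | f x = c} := by
    simp only [mul_right_inj' ht]
  simp only [sum_stdAddChar_eq_zero_iff (f := fun x => t * f x), sum_stdAddChar_eq_zero_iff]
  refine ⟨fun h c c' => by rw [← hfib, ← hfib, h], fun h c c' => ?_⟩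
  rw [← mul_div_cancel₀ c ht, ← mul_div_cancel₀ c' ht, hfib, hfib, h]

lemma card_eq_mul_card_filter_of_forall_eq
    (h : ∀ c c', #{x ∈ S | f x = c} = #{x ∈ S | f x = c'}) (c : ZMod p) :
    #S = p * #{x ∈ S | f x = c} := by
  rw [card_eq_sum_card_fiberwise fun x _ => mem_univ (f x), sum_congr rfl fun c' _ => h c' c,
    sum_const, card_univ, ZMod.card, smul_eq_mul]

lemma card_filter_eq_of_sum_stdAddChar_eq_zero {m : ℕ} (h : ∑ x ∈ S, stdAddChar (f x) = 0)
    (hS : #S = m * p) (c : ZMod p) : #{x ∈ S | f x = c} = m :=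
  Nat.eq_of_mul_eq_mul_left (Fact.out : p.Prime).pos <| by
    rw [← card_eq_mul_card_filter_of_forall_eq (sum_stdAddChar_eq_zero_iff.mp h), hS, mul_comm]

end ZMod

lemma Matrix.mul_eq_smul_one_comm_of_card_eq {K m n : Type*} [Field K] [Fintype m]
    [Fintype n] [DecidableEq m] [DecidableEq n] {A : Matrix m n K} {B : Matrix n m K} {c : K}
    (hc : c ≠ 0) (hcard : Fintype.card m = Fintype.card n) (h : B * A = c • 1) :
    A * B = c • 1 := by
  have hinv : (c⁻¹ • B) * A = 1 := by rw [smul_mul, h, smul_smul, inv_mul_cancel₀ hc, one_smul]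
  have := (mul_eq_one_comm_of_card_eq _ _ _ hcard).mpr hinv
  rwa [Matrix.mul_smul, inv_smul_eq_iff₀ hc] at this

lemma AddChar.sum_addSubgroup_eq_ite {G R : Type*} [AddCommGroup G] [CommRing R] [IsDomain R]
    (ψ : AddChar G R) (H : AddSubgroup G) [Fintype H] [Decidable (∀ h ∈ H, ψ h = 1)] :
    ∑ h : H, ψ h = if ∀ h ∈ H, ψ h = 1 then (Fintype.card H : R) else 0 := by
  have h := AddChar.sum_eq_ite (ψ.compAddMonoidHom H.subtype)
  simp only [AddChar.compAddMonoidHom_apply, AddSubgroup.coe_subtype] at h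
  rw [h]
  congr 1
  simp [AddChar.ext_iff]

open ZMod (stdAddChar)

variable {p : ℕ} [Fact p.Prime]

section Orthogonality

variable {ι : Type*} [Fintype ι]

-- `∑ x ∈ E, ψ (x ⬝ᵥ (a - b))` is the `L²(E)` inner product of the characters `χ_a` and `χ_b`.
def CharactersOrthogonalOn (A E : Finset (ι → ZMod p)) : Prop :=
  ∀ a ∈ A, ∀ b ∈ A, a ≠ b → ∑ x ∈ E, stdAddChar (x ⬝ᵥ (a - b)) = 0

lemma star_stdAddChar_mul (z w : ZMod p) :
    star (stdAddChar z) * stdAddChar w = stdAddChar (w - z) := by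
  rw [sub_eq_neg_add, AddChar.map_add_eq_mul, AddChar.map_neg_eq_conj]; rfl

lemma chr_eq_stdAddChar {d : ℕ} (a x : Fin d → ZMod p) : chr p a x = stdAddChar (x ⬝ᵥ a) := by
  rw [ZMod.stdAddChar_apply, ZMod.toCircle_apply, chr]; rfl

lemma IsSpectralPair.charactersOrthogonalOn {d : ℕ} {E A : Finset (Fin d → ZMod p)}
    (h : IsSpectralPair p E A) : CharactersOrthogonalOn A E := by
  intro a ha b hb hab
  rw [← h.1 a ha b hb hab]
  refine sum_congr rfl fun x _ => ?_
  rw [chr_eq_stdAddChar, chr_eq_stdAddChar, mul_comm, starRingEnd_apply, star_stdAddChar_mul,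
    dotProduct_sub]

variable {A E : Finset (ι → ZMod p)}

lemma CharactersOrthogonalOn.symm (h : CharactersOrthogonalOn A E)
    (hcard : #A = #E) : CharactersOrthogonalOn E A := by
  intro x hx y hy hxy
  let M : Matrix E A ℂ := Matrix.of fun x a => stdAddChar (x.1 ⬝ᵥ a.1)
  have hgram : Mᴴ * M = (#E : ℂ) • 1 := by
    ext a b
    simp only [M, mul_apply, conjTranspose_apply, of_apply, star_stdAddChar_mul, ← dotProduct_sub,
      Matrix.smul_apply, one_apply, smul_eq_mul, mul_ite, mul_one, mul_zero]
    split_ifs with hab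
    · simp [hab]
    · rw [sum_coe_sort E fun x => stdAddChar (x ⬝ᵥ (b.1 - a.1))]
      exact h b b.2 a a.2 fun hba => hab (Subtype.ext hba.symm)
  have hE : (#E : ℂ) ≠ 0 := Nat.cast_ne_zero.mpr (card_ne_zero_of_mem hx)
  have hdual := congrFun₂ (Matrix.mul_eq_smul_one_comm_of_card_eq hE
    (by simp only [Fintype.card_coe, hcard]) hgram) ⟨x, hx⟩ ⟨y, hy⟩
  simp only [M, mul_apply, conjTranspose_apply, of_apply, Matrix.smul_apply, one_apply, smul_eq_mul,
    Subtype.mk.injEq, if_neg hxy, mul_zero] at hdual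
  rw [← hdual, ← sum_coe_sort A]
  refine sum_congr rfl fun a _ => ?_
  rw [mul_comm, star_stdAddChar_mul, ← sub_dotProduct, dotProduct_comm]

lemma CharactersOrthogonalOn.sum_eq_zero_of_sub_eq_smul (h : CharactersOrthogonalOn E A)
    {x y u : ι → ZMod p} (hx : x ∈ E) (hy : y ∈ E) (hxy : x ≠ y) {t : ZMod p}
    (ht : x - y = t • u) : ∑ a ∈ A, stdAddChar (a ⬝ᵥ u) = 0 := by
  have ht0 : t ≠ 0 := by
    rintro rfl
    exact hxy (sub_eq_zero.mp (ht.trans (zero_smul _ u)))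
  rw [← ZMod.sum_stdAddChar_mul_eq_zero_iff ht0]
  simpa only [ht, dotProduct_smul, smul_eq_mul] using h x hx y hy hxy

end Orthogonality

section Hyperplanes

variable {n : ℕ}

lemma card_filter_dotProduct_eq {d : Fin (n + 1) → ZMod p} (hd : d ≠ 0) (c : ZMod p) :
    #{w | w ⬝ᵥ d = c} = p ^ n := by
  let f : (Fin (n + 1) → ZMod p) →+ ZMod p :=
    AddMonoidHom.mk' (· ⬝ᵥ d) fun x y => add_dotProduct x y d
  obtain ⟨i, hi⟩ := Function.ne_iff.mp hd
  have hf (c : ZMod p) : c ∈ Set.range f :=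
    ⟨Pi.single i (c / d i), by simp [f, single_dotProduct, div_mul_cancel₀ c hi]⟩
  have htot := ZMod.card_eq_mul_card_filter_of_forall_eq (S := univ) (f := f)
    (fun c c' => AddMonoidHom.card_fiber_eq_of_mem_range f (hf c) (hf c')) c
  rw [card_univ, Fintype.card_fun, ZMod.card, Fintype.card_fin, pow_succ'] at htot
  exact (Nat.eq_of_mul_eq_mul_left (Fact.out : p.Prime).pos htot).symm

lemma pow_le_card_filter_dotProduct_eq_zero_and (d z : Fin (n + 2) → ZMod p) :
    p ^ n ≤ #{w | w ⬝ᵥ d = 0 ∧ w ⬝ᵥ z = 0} := by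
  let f : (Fin (n + 2) → ZMod p) →+ ZMod p × ZMod p :=
    AddMonoidHom.mk' (fun w => (w ⬝ᵥ d, w ⬝ᵥ z)) fun x y => by simp [add_dotProduct]
  have hker : #{w | w ⬝ᵥ d = 0 ∧ w ⬝ᵥ z = 0} = #{w | f w = 0} := by
    simp [f, Prod.ext_iff]
  have hfib : ∀ y ∈ univ.image f, #{w | f w = y} = #{w | f w = 0} := fun y hy =>
    AddMonoidHom.card_fiber_eq_of_mem_range f (by simpa using hy) ⟨0, map_zero f⟩
  have htot := card_eq_sum_card_image f univ
  rw [sum_congr rfl hfib, sum_const, smul_eq_mul, card_univ, Fintype.card_fun, ZMod.card,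
    Fintype.card_fin] at htot
  have himage : #(univ.image f) ≤ p ^ 2 := by
    simpa [sq] using card_le_univ (univ.image f)
  rw [hker]
  refine Nat.le_of_mul_le_mul_left ?_ (pow_pos (Fact.out : p.Prime).pos 2)
  calc p ^ 2 * p ^ n = p ^ (n + 2) := by ring
    _ = _ := htot
    _ ≤ _ := Nat.mul_le_mul_right _ himage

lemma card_filter_dotProduct_eq_le {S : Finset (Fin (n + 2) → ZMod p)}
    {u w : Fin (n + 2) → ZMod p} (hw : w ≠ 0) (hu : u ≠ 0) (huw : u ⬝ᵥ w = 0)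
    (hS : ∀ x ∈ S, ∀ y ∈ S, ∀ t : ZMod p, x - y = t • u → x = y) (c : ZMod p) :
    #{x ∈ S | x ⬝ᵥ w = c} ≤ p ^ n := by
  have hmaps : ∀ q ∈ {x ∈ S | x ⬝ᵥ w = c} ×ˢ (univ : Finset (ZMod p)),
      q.1 + q.2 • u ∈ ({x | x ⬝ᵥ w = c} : Finset _) := by
    rintro ⟨x, s⟩ hq
    simp_all [add_dotProduct, smul_dotProduct]
  have hinj : Set.InjOn (fun q : _ × ZMod p => q.1 + q.2 • u)
      ↑({x ∈ S | x ⬝ᵥ w = c} ×ˢ (univ : Finset (ZMod p))) := by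
    rintro ⟨x, s⟩ hx ⟨y, t⟩ hy hxy
    simp only [mem_coe, mem_product, mem_filter, mem_univ, and_true] at hx hy hxy
    obtain rfl : x = y := hS x hx.1 y hy.1 (t - s) <| by
      rw [sub_smul, sub_eq_sub_iff_add_eq_add, hxy]; exact add_comm _ _
    rw [smul_left_injective _ hu (add_left_cancel hxy)]
  have := card_le_card_of_injOn _ hmaps hinj
  rw [card_product, card_univ, ZMod.card, card_filter_dotProduct_eq hw c, pow_succ] at this
  exact Nat.le_of_mul_le_mul_right this (Fact.out : p.Prime).pos

lemma exists_sum_stdAddChar_ne_zero_of_not_dvd {w : Fin (n + 1) → ZMod p} (hw : w ≠ 0)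
    {A : Finset (Fin (n + 1) → ZMod p)} (hA : ¬ p ^ n ∣ #A) :
    ∃ u ≠ 0, u ⬝ᵥ w = 0 ∧ ∑ a ∈ A, stdAddChar (a ⬝ᵥ u) ≠ 0 := by
  classical
  by_contra! hall
  let H := (LinearMap.ker ((dotProductBilin (ZMod p) (ZMod p)).flip w)).toAddSubgroup
  have hmem (u) : u ∈ H ↔ u ⬝ᵥ w = 0 := by simp [H]
  have hcard : Fintype.card H = p ^ n := by
    rw [Fintype.card_subtype, ← card_filter_dotProduct_eq hw 0]
    simp only [hmem]
  let χ (a : Fin (n + 1) → ZMod p) : AddChar (Fin (n + 1) → ZMod p) ℂ :=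
    stdAddChar.compAddMonoidHom (dotProductBilin (ZMod p) (ZMod p) a).toAddMonoidHom
  have hχ (a u) : χ a u = stdAddChar (a ⬝ᵥ u) := rfl
  have h1 : ∑ u : H, ∑ a ∈ A, stdAddChar (a ⬝ᵥ u) = #A := by
    rw [Fintype.sum_eq_single 0 fun (u : H) hu => hall u (by simpa using hu) ((hmem u).mp u.2)]
    simp
  have h2 : ∑ u : H, ∑ a ∈ A, stdAddChar (a ⬝ᵥ u) =
      Fintype.card H * #{a ∈ A | ∀ u ∈ H, χ a u = 1} := by
    simp only [← hχ]
    rw [sum_comm, sum_congr rfl fun a _ => AddChar.sum_addSubgroup_eq_ite (χ a) H, sum_ite,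
      sum_const_zero, add_zero, sum_const, nsmul_eq_mul, mul_comm]
  rw [h2, hcard] at h1
  exact hA ⟨_, by exact_mod_cast h1.symm⟩

end Hyperplanes

section Lines

open scoped Classical

variable {ι : Type*} [Fintype ι] {E A : Finset (ι → ZMod p)} {m : ℕ} {d v w : ι → ZMod p}

lemma exists_dotProduct_eq_zero_sum_stdAddChar_eq_zero (hEA : CharactersOrthogonalOn E A)
    (hAE : CharactersOrthogonalOn A E) (hA : #A = m * p) (hm : 2 ≤ m) {x y : ι → ZMod p}
    (hx : x ∈ E) (hy : y ∈ E) (hxy : x ≠ y) (hd : x - y ∈ ZMod p ∙ d) :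
    ∃ w ≠ 0, w ⬝ᵥ d = 0 ∧ ∑ x ∈ E, stdAddChar (x ⬝ᵥ w) = 0 := by
  obtain ⟨t, ht⟩ := Submodule.mem_span_singleton.mp hd
  have hsum := hEA.sum_eq_zero_of_sub_eq_smul hx hy hxy ht.symm
  have hcard : 1 < #{a ∈ A | a ⬝ᵥ d = 0} := by
    rw [ZMod.card_filter_eq_of_sum_stdAddChar_eq_zero hsum hA]; omega
  obtain ⟨a, ha, b, hb, hab⟩ := one_lt_card.mp hcard
  rw [mem_filter] at ha hb
  exact ⟨a - b, sub_ne_zero.mpr hab, by rw [sub_dotProduct, ha.2, hb.2, sub_self],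
    hAE a ha.1 b hb.1 hab⟩

lemma card_filter_sub_mem_span_le (hw : w ⬝ᵥ d = 0)
    (hE : ∀ c, #{x ∈ E | x ⬝ᵥ w = c} = m) : #{x ∈ E | x - v ∈ ZMod p ∙ d} ≤ m := by
  rw [← hE (v ⬝ᵥ w)]
  refine card_le_card (monotone_filter_right _ fun x _ hx => ?_)
  obtain ⟨t, ht⟩ := Submodule.mem_span_singleton.mp hx
  rw [← sub_eq_zero, ← sub_dotProduct, ← ht, smul_dotProduct, dotProduct_comm, hw, smul_zero]

end Lines

section Pencil

open scoped Classical

variable {E A : Finset (Fin 3 → ZMod p)} {m : ℕ} {d v w₀ : Fin 3 → ZMod p}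

lemma card_filter_dotProduct_eq_le_of_charactersOrthogonalOn (hEA : CharactersOrthogonalOn E A)
    (hA : #A = m * p) (hm : 0 < m) (hmp : m < p) {w : Fin 3 → ZMod p} (hw : w ≠ 0)
    (c : ZMod p) : #{x ∈ E | x ⬝ᵥ w = c} ≤ p := by
  have hdvd : ¬ p ^ 2 ∣ #A := by
    rw [hA, sq, Nat.mul_dvd_mul_iff_right (Fact.out : p.Prime).pos]
    exact fun h => (Nat.le_of_dvd hm h).not_gt hmp
  obtain ⟨u, hu, huw, hsum⟩ := exists_sum_stdAddChar_ne_zero_of_not_dvd hw hdvd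
  simpa using card_filter_dotProduct_eq_le (n := 1) hw hu huw (fun x hx y hy t h =>
    by_contra fun hxy => hsum (hEA.sum_eq_zero_of_sub_eq_smul hx hy hxy h)) c

lemma card_filter_sub_mem_span_mul_sq_add_le_sum (hd : d ≠ 0) :
    #{x ∈ E | x - v ∈ ZMod p ∙ d} * p ^ 2 + #{x ∈ E | x - v ∉ ZMod p ∙ d} * p ≤
      ∑ x ∈ E, #{w | w ⬝ᵥ d = 0 ∧ x ⬝ᵥ w = v ⬝ᵥ w} := by
  have hiff (x w : Fin 3 → ZMod p) : x ⬝ᵥ w = v ⬝ᵥ w ↔ w ⬝ᵥ (x - v) = 0 := by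
    rw [dotProduct_sub, sub_eq_zero, dotProduct_comm w, dotProduct_comm w]
  rw [← sum_filter_add_sum_filter_not E (fun x => x - v ∈ ZMod p ∙ d)]
  let M (x : Fin 3 → ZMod p) := #{w | w ⬝ᵥ d = 0 ∧ x ⬝ᵥ w = v ⬝ᵥ w}
  have hline := card_nsmul_le_sum {x ∈ E | x - v ∈ ZMod p ∙ d} M (p ^ 2) fun x hx => by
    obtain ⟨t, ht⟩ := Submodule.mem_span_singleton.mp (mem_filter.mp hx).2
    rw [← card_filter_dotProduct_eq hd 0]
    refine card_le_card (monotone_filter_right _ fun w _ hw => ⟨hw, ?_⟩)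
    rw [hiff, ← ht, dotProduct_smul, hw, smul_zero]
  have hrest := card_nsmul_le_sum {x ∈ E | x - v ∉ ZMod p ∙ d} M p fun x _ => by
    refine (pow_one p).symm.le.trans
      ((pow_le_card_filter_dotProduct_eq_zero_and d (x - v)).trans_eq ?_)
    simp only [M, hiff]
  rw [smul_eq_mul] at hline hrest
  exact add_le_add hline hrest

lemma sum_card_filter_dotProduct_eq_le (hd : d ≠ 0) (hw₀ : w₀ ≠ 0) (hw₀d : w₀ ⬝ᵥ d = 0)
    (hequi : ∀ c, #{x ∈ E | x ⬝ᵥ w₀ = c} = m)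
    (hplane : ∀ w ≠ 0, ∀ c, #{x ∈ E | x ⬝ᵥ w = c} ≤ p) (hE : #E = m * p) :
    ∑ w with w ⬝ᵥ d = 0, #{x ∈ E | x ⬝ᵥ w = v ⬝ᵥ w} ≤
      m * p + (p - 1) * m + (p ^ 2 - p) * p := by
  set K := ({w | w ⬝ᵥ d = 0} : Finset (Fin 3 → ZMod p))
  set K₀ := univ.image fun t : ZMod p => t • w₀
  have hK₀ : K₀ ⊆ K := by
    intro w hw
    obtain ⟨t, -, rfl⟩ := mem_image.mp hw
    simp [K, hw₀d]
  have hK₀card : #K₀ = p := by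
    rw [card_image_of_injective _ (smul_left_injective _ hw₀), card_univ, ZMod.card]
  have hKcard : #K = p ^ 2 := card_filter_dotProduct_eq hd 0
  rw [← sum_sdiff hK₀, add_comm]
  refine add_le_add (le_of_eq ?_) ?_
  · rw [sum_image fun s _ t _ h => smul_left_injective _ hw₀ h,
      Fintype.sum_eq_add_sum_compl 0]
    beta_reduce
    have hfib : ∀ t ∈ ({0}ᶜ : Finset (ZMod p)), #{x ∈ E | x ⬝ᵥ t • w₀ = v ⬝ᵥ t • w₀} = m :=
      fun t ht => by
        have ht0 : t ≠ 0 := by simpa using ht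
        simp only [dotProduct_smul, smul_eq_mul, mul_right_inj' ht0, hequi]
    rw [sum_congr rfl hfib]
    simp [hE, card_compl]
  · have hK₀0 : (0 : Fin 3 → ZMod p) ∈ K₀ := mem_image.mpr ⟨0, mem_univ _, zero_smul _ w₀⟩
    have hsdiff : #(K \ K₀) = p ^ 2 - p := by rw [card_sdiff_of_subset hK₀, hKcard, hK₀card]
    have := sum_le_card_nsmul (K \ K₀) (fun w => #{x ∈ E | x ⬝ᵥ w = v ⬝ᵥ w}) p fun w hw =>
      hplane w (fun h => (mem_sdiff.mp hw).2 (h ▸ hK₀0)) _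
    rwa [hsdiff, smul_eq_mul] at this

lemma card_filter_sub_mem_span_le_sub (hd : d ≠ 0) (hw₀ : w₀ ≠ 0) (hw₀d : w₀ ⬝ᵥ d = 0)
    (hequi : ∀ c, #{x ∈ E | x ⬝ᵥ w₀ = c} = m)
    (hplane : ∀ w ≠ 0, ∀ c, #{x ∈ E | x ⬝ᵥ w = c} ≤ p) (hE : #E = m * p) (hmp : m < p) :
    #{x ∈ E | x - v ∈ ZMod p ∙ d} ≤ p - m := by
  have hswap : ∑ x ∈ E, #{w | w ⬝ᵥ d = 0 ∧ x ⬝ᵥ w = v ⬝ᵥ w} =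
      ∑ w with w ⬝ᵥ d = 0, #{x ∈ E | x ⬝ᵥ w = v ⬝ᵥ w} := by
    simp only [← filter_filter]
    exact sum_card_bipartiteAbove_eq_sum_card_bipartiteBelow _
  have h := (card_filter_sub_mem_span_mul_sq_add_le_sum hd).trans
    (hswap.trans_le (sum_card_filter_dotProduct_eq_le hd hw₀ hw₀d hequi hplane hE))
  have hkr := card_filter_add_card_filter_not (s := E) (fun x => x - v ∈ ZMod p ∙ d)
  generalize #{x ∈ E | x - v ∈ ZMod p ∙ d} = k at h hkr ⊢
  generalize #{x ∈ E | x - v ∉ ZMod p ∙ d} = r at h hkr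
  rw [hE] at hkr
  -- `h` says `(p - 1) (k p + m p - m - p²) ≤ 0`, so `k p < p² - m p + p`.
  obtain ⟨q, rfl⟩ : ∃ q, p = q + 1 := ⟨p - 1, by omega⟩
  have hsq : (q + 1) ^ 2 - (q + 1) = q * (q + 1) := by
    rw [Nat.sub_eq_iff_eq_add (by nlinarith)]; ring
  rw [hsq, Nat.add_sub_cancel] at h
  have : k * (q + 1) + m * (q + 1) < (q + 1) * (q + 2) := by nlinarith
  have : k + m < q + 2 := by nlinarith
  omega

lemma card_filter_sub_mem_span_le_min (hEA : CharactersOrthogonalOn E A)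
    (hAE : CharactersOrthogonalOn A E) (hE : #E = m * p) (hA : #A = m * p) (hm : 2 ≤ m)
    (hmp : m < p) (hd : d ≠ 0) :
    #{x ∈ E | x - v ∈ ZMod p ∙ d} ≤ min m (p - m) := by
  rcases le_or_gt #{x ∈ E | x - v ∈ ZMod p ∙ d} 1 with hk | hk
  · omega
  obtain ⟨x, hx, y, hy, hxy⟩ := one_lt_card.mp hk
  rw [mem_filter] at hx hy
  obtain ⟨w₀, hw₀, hw₀d, hsum⟩ := exists_dotProduct_eq_zero_sum_stdAddChar_eq_zero hEA hAE hA hm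
    hx.1 hy.1 hxy (sub_sub_sub_cancel_right x y v ▸ Submodule.sub_mem _ hx.2 hy.2)
  have hequi := ZMod.card_filter_eq_of_sum_stdAddChar_eq_zero hsum hE
  have hplane (w : Fin 3 → ZMod p) (hw : w ≠ 0) :=
    card_filter_dotProduct_eq_le_of_charactersOrthogonalOn hEA hA (by omega) hmp hw
  exact le_min (card_filter_sub_mem_span_le hw₀d hequi)
    (card_filter_sub_mem_span_le_sub hd hw₀ hw₀d hequi hplane hE hmp)

end Pencil

theorem line_concentration_bound_general (p m : ℕ) (hp : p.Prime)
    (E A : Finset (Fin 3 → ZMod p)) (hpair : IsSpectralPair p E A)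
    (hE : E.card = m * p) (hA : A.card = m * p)
    (hm : 2 ≤ m) (hm' : m ≤ p - 1)
    (D : Submodule (ZMod p) (Fin 3 → ZMod p))
    (hD : Module.finrank (ZMod p) D = 1) (v : Fin 3 → ZMod p) :
    ((E : Set (Fin 3 → ZMod p)) ∩ {x | x - v ∈ D}).ncard ≤ min m (p - m) ∧
    ((A : Set (Fin 3 → ZMod p)) ∩ {x | x - v ∈ D}).ncard ≤ min m (p - m) := by
  have := Fact.mk hp
  classical
  obtain ⟨d, hdD, hd⟩ := Submodule.exists_mem_ne_zero_of_ne_bot (p := D)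
    fun h => by subst h; simp at hD
  obtain rfl := eq_span_singleton_of_mem_of_finrank_eq_one hD hdD hd
  have hAE := hpair.charactersOrthogonalOn
  have hEA := hAE.symm (hA.trans hE.symm)
  have hmp : m < p := by omega
  have hncard (S : Finset (Fin 3 → ZMod p)) :
      ((S : Set (Fin 3 → ZMod p)) ∩ {x | x - v ∈ ZMod p ∙ d}).ncard =
        #{x ∈ S | x - v ∈ ZMod p ∙ d} := by
    rw [← Set.ncard_coe_finset, coe_filter]
    rfl
  rw [hncard, hncard]
  exact ⟨card_filter_sub_mem_span_le_min hEA hAE hE hA hm hmp hd,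
    card_filter_sub_mem_span_le_min hAE hEA hA hE hm hmp hd⟩

/-- If `(E, A)` is a spectral pair in `𝔽_p^3` (`p` an odd prime) with
`|E| = |A| = mp`, `2 ≤ m ≤ p - 1`, then every line (coset of a one-dimensional
subspace) contains at most `min m (p - m)` points of `E`, and likewise for `A`. -/
theorem line_concentration_bound (p m : ℕ) (hp : p.Prime) (hodd : Odd p)
    (E A : Finset (Fin 3 → ZMod p)) (hpair : IsSpectralPair p E A)
    (hE : E.card = m * p) (hA : A.card = m * p)
    (hm : 2 ≤ m) (hm' : m ≤ p - 1)
    (D : Submodule (ZMod p) (Fin 3 → ZMod p))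
    (hD : Module.finrank (ZMod p) D = 1) (v : Fin 3 → ZMod p) :
    ((E : Set (Fin 3 → ZMod p)) ∩ {x | x - v ∈ D}).ncard ≤ min m (p - m) ∧
    ((A : Set (Fin 3 → ZMod p)) ∩ {x | x - v ∈ D}).ncard ≤ min m (p - m) :=
  line_concentration_bound_general p m hp E A hpair hE hA hm hm' D hD v
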